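/- In the set-disjointness lower-bound graph G, if a_i ≠ b_j (the two ℓ-bit strings differ in at least one bit), then dist_G(u_i, v_j) = 2. -/

import Mathlib

namespace SetDisjointness

/-- Vertices of the set-disjointness lower-bound graph:
`uA i`, `vB j`, `wC m`, `xD m`, and the two special vertices `u*`, `v*`. -/
abbrev Vert (α β ℓ : ℕ) := (Fin α ⊕ Fin β) ⊕ ((Fin ℓ ⊕ Fin ℓ) ⊕ Bool)

variable {α β ℓ : ℕ}

def uA (i : Fin α) : Vert α β ℓ := Sum.inl (Sum.inl i)
def vB (j : Fin β) : Vert α β ℓ := Sum.inl (Sum.inr j)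
def wC (m : Fin ℓ) : Vert α β ℓ := Sum.inr (Sum.inl (Sum.inl m))
def xD (m : Fin ℓ) : Vert α β ℓ := Sum.inr (Sum.inl (Sum.inr m))
def ustar : Vert α β ℓ := Sum.inr (Sum.inr false)
def vstar : Vert α β ℓ := Sum.inr (Sum.inr true)

/-- One direction of the edge relation of the set-disjointness lower-bound graph:
`u_i ~ w_m` iff the `m`-th bit of `a_i` is 1; `u_i ~ x_m` iff it is 0;
`v_j ~ w_m` iff the `m`-th bit of `b_j` is 0; `v_j ~ x_m` iff it is 1;
`u*` is adjacent to all of `V_A ∪ V_C ∪ V_D`; `v*` to all of `V_B ∪ V_C ∪ V_D`. -/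
def sdRel (a : Fin α → Fin ℓ → Bool) (b : Fin β → Fin ℓ → Bool) :
    Vert α β ℓ → Vert α β ℓ → Prop
  | Sum.inl (Sum.inl i), Sum.inr (Sum.inl (Sum.inl m)) => a i m = true
  | Sum.inl (Sum.inl i), Sum.inr (Sum.inl (Sum.inr m)) => a i m = false
  | Sum.inl (Sum.inr j), Sum.inr (Sum.inl (Sum.inl m)) => b j m = false
  | Sum.inl (Sum.inr j), Sum.inr (Sum.inl (Sum.inr m)) => b j m = true
  | Sum.inr (Sum.inr false), Sum.inl (Sum.inl _) => True
  | Sum.inr (Sum.inr false), Sum.inr (Sum.inl _) => True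
  | Sum.inr (Sum.inr true), Sum.inl (Sum.inr _) => True
  | Sum.inr (Sum.inr true), Sum.inr (Sum.inl _) => True
  | _, _ => False

/-- The set-disjointness lower-bound graph. -/
def SDGraph (a : Fin α → Fin ℓ → Bool) (b : Fin β → Fin ℓ → Bool) :
    SimpleGraph (Vert α β ℓ) :=
  SimpleGraph.fromRel (sdRel a b)

theorem _root_.SimpleGraph.dist_eq_two_iff {V : Type*} {G : SimpleGraph V} {u v : V} :
    G.dist u v = 2 ↔ u ≠ v ∧ ¬G.Adj u v ∧ (G.commonNeighbors u v).Nonempty := by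
  rw [SimpleGraph.dist, ENat.toNat_eq_iff two_ne_zero, Nat.cast_ofNat,
    SimpleGraph.edist_eq_two_iff]

section Adjacency

variable (a : Fin α → Fin ℓ → Bool) (b : Fin β → Fin ℓ → Bool)
  (i : Fin α) (j : Fin β) (m : Fin ℓ)

theorem uA_ne_vB : (uA i : Vert α β ℓ) ≠ vB j := by
  simp [uA, vB]

theorem not_adj_uA_vB : ¬(SDGraph a b).Adj (uA i) (vB j) := by
  rintro ⟨-, h | h⟩ <;> simp [uA, vB, sdRel] at h

theorem adj_uA_wC : (SDGraph a b).Adj (uA i) (wC m) ↔ a i m = true := by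
  simp [SDGraph, uA, wC, sdRel]

theorem adj_uA_xD : (SDGraph a b).Adj (uA i) (xD m) ↔ a i m = false := by
  simp [SDGraph, uA, xD, sdRel]

theorem adj_vB_wC : (SDGraph a b).Adj (vB j) (wC m) ↔ b j m = false := by
  simp [SDGraph, vB, wC, sdRel]

theorem adj_vB_xD : (SDGraph a b).Adj (vB j) (xD m) ↔ b j m = true := by
  simp [SDGraph, vB, xD, sdRel]

end Adjacency

theorem commonNeighbors_uA_vB_nonempty {a : Fin α → Fin ℓ → Bool}
    {b : Fin β → Fin ℓ → Bool} {i : Fin α} {j : Fin β} (hij : a i ≠ b j) :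
    ((SDGraph a b).commonNeighbors (uA i) (vB j)).Nonempty := by
  obtain ⟨m, hm⟩ := Function.ne_iff.mp hij
  cases ha : a i m
  · refine ⟨xD m, (adj_uA_xD a b i m).mpr ha, (adj_vB_xD a b j m).mpr ?_⟩
    simpa [ha] using hm.symm
  · refine ⟨wC m, (adj_uA_wC a b i m).mpr ha, (adj_vB_wC a b j m).mpr ?_⟩
    simpa [ha] using hm.symm

theorem sd_dist_eq_two_general (a : Fin α → Fin ℓ → Bool)
    (b : Fin β → Fin ℓ → Bool) (i : Fin α) (j : Fin β) (hij : a i ≠ b j) :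
    (SDGraph a b).dist (uA i) (vB j) = 2 :=
  SimpleGraph.dist_eq_two_iff.mpr
    ⟨uA_ne_vB i j, not_adj_uA_vB a b i j, commonNeighbors_uA_vB_nonempty hij⟩

/-- If the bit strings `a_i` and `b_j` differ, then `dist_G(u_i, v_j) = 2`. -/
theorem sd_dist_eq_two (hl : 1 ≤ ℓ) (a : Fin α → Fin ℓ → Bool)
    (b : Fin β → Fin ℓ → Bool) (i : Fin α) (j : Fin β) (hij : a i ≠ b j) :
    (SDGraph a b).dist (uA i) (vB j) = 2 :=
  sd_dist_eq_two_general a b i j hij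

end SetDisjointness
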